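/- arXiv:2204.04893 — 7 statements merged into one kernel-verified Lean document; each statement's English description precedes it below -/
import Mathlib

section
/- Let X be a metric space and μ a Borel probability measure on X. If closed sets A_n converge weakly (in the Kuratowski–Painlevé sense) to a closed set A, then μ(A) ≥ limsup_n μ(A_n). -/
/-! A point lying in infinitely many `A n` has `liminf_n d(x, A n) = 0`, so it cannot lie
outside the weak limit; hence `limsup A ⊆ L`, and reverse Fatou for the finite measure `μ`
gives `limsup μ (A n) ≤ μ (limsup A) ≤ μ L`. -/

open MeasureTheory Metric EMetric Set Filter Topology ENNReal

def WeakConvSets {X : Type*} [PseudoEMetricSpace X] (A : ℕ → Set X) (L : Set X) : Prop :=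
  (∀ x ∈ L, Filter.Tendsto (fun n => EMetric.infEdist x (A n)) Filter.atTop (nhds 0)) ∧
  (∀ x ∉ L, 0 < Filter.liminf (fun n => EMetric.infEdist x (A n)) Filter.atTop)

theorem WeakConvSets.limsup_subset {X : Type*} [PseudoEMetricSpace X] {A : ℕ → Set X}
    {L : Set X} (h : WeakConvSets A L) : limsup A atTop ⊆ L := by
  intro x hx
  by_contra hxL
  have hfreq : ∃ᶠ n in atTop, infEDist x (A n) ≤ 0 :=
    (mem_limsup_iff_frequently_mem.mp hx).mono fun n hn => (Metric.infEDist_zero_of_mem hn).le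
  exact (h.2 x hxL).not_ge (liminf_le_of_frequently_le' hfreq)

theorem limsup_measure_le_measure_limsup {α : Type*} [MeasurableSpace α] (μ : Measure α)
    [IsFiniteMeasure μ] {s : ℕ → Set α} (hs : ∀ n, NullMeasurableSet (s n) μ) :
    limsup (fun n => μ (s n)) atTop ≤ μ (limsup s atTop) := by
  have htail_anti : Antitone fun n => ⋃ i ≥ n, s i := fun m n hmn =>
    biUnion_mono (fun i hi => le_trans hmn hi) fun _ _ => Subset.rfl
  have htail_meas : ∀ n, NullMeasurableSet (⋃ i ≥ n, s i) μ := fun n =>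
    .iUnion fun i => .iUnion fun _ => hs i
  calc limsup (fun n => μ (s n)) atTop = ⨅ n, ⨆ i ≥ n, μ (s i) := limsup_eq_iInf_iSup_of_nat
    _ ≤ ⨅ n, μ (⋃ i ≥ n, s i) :=
      iInf_mono fun n => iSup₂_le fun i hi => measure_mono (subset_biUnion_of_mem hi)
    _ = μ (⋂ n, ⋃ i ≥ n, s i) :=
      (htail_anti.measure_iInter htail_meas ⟨0, measure_ne_top μ _⟩).symm
    _ = μ (limsup s atTop) := by rw [limsup_eq_iInf_iSup_of_nat]; rfl

theorem stmt4_general {X : Type*} [MetricSpace X] [MeasurableSpace X] [BorelSpace X]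
    (μ : Measure X) [IsProbabilityMeasure μ] (A : ℕ → Set X) (L : Set X)
    (hA : ∀ n, IsClosed (A n)) (h : WeakConvSets A L) :
    Filter.limsup (fun n => μ (A n)) Filter.atTop ≤ μ L :=
  (limsup_measure_le_measure_limsup μ fun n => (hA n).nullMeasurableSet).trans
    (measure_mono h.limsup_subset)

theorem stmt4 {X : Type*} [MetricSpace X] [MeasurableSpace X] [BorelSpace X]
    (μ : Measure X) [IsProbabilityMeasure μ] (A : ℕ → Set X) (L : Set X)
    (hA : ∀ n, IsClosed (A n)) (hL : IsClosed L) (h : WeakConvSets A L) :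
    Filter.limsup (fun n => μ (A n)) Filter.atTop ≤ μ L :=
  stmt4_general μ A L hA h
end

section
/- Let X × X carry the l¹-metric for a metric space X. If closed sets S_n ⊆ X × X converge weakly (Kuratowski–Painlevé) to a closed set S, then dis_Δ(S) ≤ liminf_n dis_Δ(S_n). -/
open MeasureTheory Metric EMetric Set Filter Topology ENNReal

/- For p ∈ L pick points qₙ ∈ Sₙ converging to p in the l¹-metric. By the triangle inequality
d(p₁, p₂) ≤ d(qₙ₁, qₙ₂) + ‖p - qₙ‖₁ ≤ dis_Δ(Sₙ) + d₁(p, Sₙ), and the last term tends to 0. -/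

noncomputable def disDelta {X : Type*} [PseudoMetricSpace X] (S : Set (X × X)) : ℝ≥0∞ :=
  ⨆ p ∈ S, ENNReal.ofReal (dist p.1 p.2)

noncomputable def infEdistL1 {X Y : Type*} [PseudoEMetricSpace X] [PseudoEMetricSpace Y]
    (p : X × Y) (S : Set (X × Y)) : ℝ≥0∞ :=
  ⨅ q ∈ S, (edist p.1 q.1 + edist p.2 q.2)

def WeakConvL1 {X Y : Type*} [PseudoEMetricSpace X] [PseudoEMetricSpace Y]
    (A : ℕ → Set (X × Y)) (L : Set (X × Y)) : Prop :=
  (∀ p ∈ L, Filter.Tendsto (fun n => infEdistL1 p (A n)) Filter.atTop (nhds 0)) ∧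
  (∀ p ∉ L, 0 < Filter.liminf (fun n => infEdistL1 p (A n)) Filter.atTop)

section

variable {X : Type*} [PseudoMetricSpace X]

theorem edist_le_disDelta {S : Set (X × X)} {q : X × X} (hq : q ∈ S) :
    edist q.1 q.2 ≤ disDelta S := by
  rw [edist_dist]
  exact le_iSup₂ (f := fun r _ => ENNReal.ofReal (dist r.1 r.2)) q hq

theorem edist_le_edist_add_edist_add_edist (p q : X × X) :
    edist p.1 p.2 ≤ edist q.1 q.2 + (edist p.1 q.1 + edist p.2 q.2) :=
  calc edist p.1 p.2 ≤ edist p.1 q.1 + edist q.1 q.2 + edist q.2 p.2 := edist_triangle4 _ _ _ _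
    _ = edist q.1 q.2 + (edist p.1 q.1 + edist p.2 q.2) := by rw [edist_comm q.2 p.2]; ring

theorem edist_le_disDelta_add_infEdistL1 (p : X × X) (S : Set (X × X)) :
    edist p.1 p.2 ≤ disDelta S + infEdistL1 p S := by
  rw [← tsub_le_iff_left]
  refine le_iInf₂ fun q hq => tsub_le_iff_left.2 ?_
  calc edist p.1 p.2 ≤ edist q.1 q.2 + (edist p.1 q.1 + edist p.2 q.2) :=
        edist_le_edist_add_edist_add_edist p q
    _ ≤ disDelta S + (edist p.1 q.1 + edist p.2 q.2) := by gcongr; exact edist_le_disDelta hq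

theorem disDelta_le_liminf_of_tendsto_infEdistL1 {S : ℕ → Set (X × X)} {L : Set (X × X)}
    (h : ∀ p ∈ L, Tendsto (fun n => infEdistL1 p (S n)) atTop (𝓝 0)) :
    disDelta L ≤ liminf (fun n => disDelta (S n)) atTop := by
  refine iSup₂_le fun p hp => ?_
  rw [← edist_dist]
  calc edist p.1 p.2 ≤ liminf (fun n => disDelta (S n) + infEdistL1 p (S n)) atTop :=
        le_liminf_of_le (by isBoundedDefault)
          (.of_forall fun n => edist_le_disDelta_add_infEdistL1 p (S n))
    _ = liminf (fun n => disDelta (S n)) atTop :=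
        ENNReal.liminf_add_of_right_tendsto_zero (h p hp) _

end

theorem stmt5_general {X : Type*} [MetricSpace X]
    (S : ℕ → Set (X × X)) (L : Set (X × X))
    (h : WeakConvL1 S L) :
    disDelta L ≤ Filter.liminf (fun n => disDelta (S n)) Filter.atTop :=
  disDelta_le_liminf_of_tendsto_infEdistL1 h.1

theorem stmt5 {X : Type*} [MetricSpace X]
    (S : ℕ → Set (X × X)) (L : Set (X × X))
    (hS : ∀ n, IsClosed (S n)) (hL : IsClosed L) (h : WeakConvL1 S L) :
    disDelta L ≤ Filter.liminf (fun n => disDelta (S n)) Filter.atTop :=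
  stmt5_general S L h
end

section
/- In a second countable metric space X, every sequence of closed subsets of X has a subsequence that converges in the weak Hausdorff (Kuratowski–Painlevé) sense to some closed set. -/
open MeasureTheory Metric EMetric Set Filter Topology ENNReal

/-! The distance functions `x ↦ infEDist x (A n)` are 1-Lipschitz with values in the compact
space `[0, ∞]`. A diagonal subsequence makes them converge on a countable dense set, hence
everywhere by equicontinuity. The pointwise limit is again 1-Lipschitz, so its zero set is closed,
and that zero set is the weak limit of the subsequence. -/

lemma exists_subseq_tendsto_of_countable {X Y : Type*} [TopologicalSpace Y] [CompactSpace Y]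
    [FirstCountableTopology Y] (u : ℕ → X → Y) {S : Set X} (hS : S.Countable) :
    ∃ φ : ℕ → ℕ, StrictMono φ ∧ ∀ x ∈ S, ∃ c, Tendsto (fun n => u (φ n) x) atTop (𝓝 c) := by
  have := hS.to_subtype
  obtain ⟨c, φ, hφ, hc⟩ := CompactSpace.tendsto_subseq fun n (x : S) => u n x
  exact ⟨φ, hφ, fun x hx => ⟨c ⟨x, hx⟩, tendsto_pi_nhds.mp hc ⟨x, hx⟩⟩⟩

section LipschitzFamily

variable {X ι : Type*} [PseudoEMetricSpace X] {l : Filter ι} [l.NeBot] {g : ι → X → ℝ≥0∞}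

lemma limsup_le_limsup_add_edist (hg : ∀ i x y, g i x ≤ g i y + edist x y) (x y : X) :
    limsup (g · x) l ≤ limsup (g · y) l + edist x y :=
  calc limsup (g · x) l ≤ limsup (fun i => g i y + edist x y) l :=
        limsup_le_limsup (.of_forall fun i => hg i x y)
    _ = limsup (g · y) l + edist x y :=
        limsup_add_const l _ _ (by isBoundedDefault) (by isBoundedDefault)

lemma liminf_le_liminf_add_edist (hg : ∀ i x y, g i x ≤ g i y + edist x y) (x y : X) :
    liminf (g · x) l ≤ liminf (g · y) l + edist x y :=
  calc liminf (g · x) l ≤ liminf (fun i => g i y + edist x y) l :=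
        liminf_le_liminf (.of_forall fun i => hg i x y)
    _ = liminf (g · y) l + edist x y :=
        liminf_add_const l _ _ (by isBoundedDefault) (by isBoundedDefault)

lemma continuous_liminf_of_le_add_edist (hg : ∀ i x y, g i x ≤ g i y + edist x y) :
    Continuous fun x => liminf (g · x) l :=
  continuous_of_le_add_edist 1 one_ne_top fun x y => by
    simpa using liminf_le_liminf_add_edist hg x y

lemma limsup_le_liminf_of_dense (hg : ∀ i x y, g i x ≤ g i y + edist x y) {S : Set X}
    (hS : Dense S) (hSconv : ∀ x ∈ S, limsup (g · x) l ≤ liminf (g · x) l) (y : X) :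
    limsup (g · y) l ≤ liminf (g · y) l := by
  refine ENNReal.le_of_forall_pos_le_add fun ε hε _ => ?_
  have hε2 : (0 : ℝ≥0∞) < ε / 2 := ENNReal.half_pos (by exact_mod_cast hε.ne')
  obtain ⟨x, hxS, hyx⟩ := EMetric.mem_closure_iff.mp (hS y) _ hε2
  calc limsup (g · y) l ≤ limsup (g · x) l + edist y x := limsup_le_limsup_add_edist hg y x
    _ ≤ liminf (g · x) l + edist y x := by gcongr; exact hSconv x hxS
    _ ≤ liminf (g · y) l + edist x y + edist y x := by
        gcongr; exact liminf_le_liminf_add_edist hg x y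
    _ ≤ liminf (g · y) l + (ε / 2 + ε / 2) := by
        rw [edist_comm x y, add_assoc]; gcongr
    _ = liminf (g · y) l + ε := by rw [ENNReal.add_halves]

lemma tendsto_liminf_of_dense (hg : ∀ i x y, g i x ≤ g i y + edist x y) {S : Set X}
    (hS : Dense S) (hSconv : ∀ x ∈ S, ∃ c, Tendsto (g · x) l (𝓝 c)) (y : X) :
    Tendsto (g · y) l (𝓝 (liminf (g · y) l)) := by
  refine tendsto_of_le_liminf_of_limsup_le le_rfl (limsup_le_liminf_of_dense hg hS ?_ y)
  intro x hx
  obtain ⟨c, hc⟩ := hSconv x hx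
  rw [hc.limsup_eq, hc.liminf_eq]

end LipschitzFamily

theorem stmt6_general {X : Type*} [MetricSpace X] [SecondCountableTopology X]
    (A : ℕ → Set X) :
    ∃ φ : ℕ → ℕ, StrictMono φ ∧ ∃ L : Set X, IsClosed L ∧
      WeakConvSets (fun n => A (φ n)) L := by
  obtain ⟨S, hSc, hSd⟩ := TopologicalSpace.exists_countable_dense X
  obtain ⟨φ, hφ, hconv⟩ := exists_subseq_tendsto_of_countable (fun n x => infEDist x (A n)) hSc
  have hlip : ∀ n (x y : X), infEDist x (A (φ n)) ≤ infEDist y (A (φ n)) + edist x y :=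
    fun _ _ _ => infEDist_le_infEDist_add_edist
  refine ⟨φ, hφ, {y | liminf (fun n => infEDist y (A (φ n))) atTop = 0},
    isClosed_singleton.preimage (continuous_liminf_of_le_add_edist hlip),
    fun y hy => hy ▸ tendsto_liminf_of_dense hlip hSd hconv y, fun y hy => pos_iff_ne_zero.2 hy⟩

theorem stmt6 {X : Type*} [MetricSpace X] [SecondCountableTopology X]
    (A : ℕ → Set X) (hA : ∀ n, IsClosed (A n)) :
    ∃ φ : ℕ → ℕ, StrictMono φ ∧ ∃ L : Set X, IsClosed L ∧
      WeakConvSets (fun n => A (φ n)) L :=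
  stmt6_general A
end

section
/- Let X be a complete separable metric space and π a Borel probability measure on X × X. Then there exists a closed set S ⊆ X × X attaining the infimum dis_Δ(π) = max{dis_Δ(S), 1 − π(S)}. -/
/-! The infimum `r` is attained by the closed band `{p | dist p.1 p.2 ≤ r}`. Its distortion is
at most `r` trivially. Any closed `S` with `max (disDelta S) (1 - π S) < t` lies in the band of
width `t`, so the band of every width `t > r` has `1 - π` at most `r`; the band of width `r` is
the decreasing intersection of these, and continuity of `π` from above passes the bound to it. -/

open MeasureTheory Metric EMetric Set Filter Topology ENNReal

noncomputable def disDeltaM {X : Type*} [PseudoMetricSpace X] [MeasurableSpace X]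
    (π : Measure (X × X)) : ℝ≥0∞ :=
  ⨅ S ∈ {S : Set (X × X) | IsClosed S}, max (disDelta S) (1 - π S)

theorem tendsto_measure_setOf_le_nhdsGT {α : Type*} [MeasurableSpace α] {μ : Measure α}
    [IsFiniteMeasure μ] {f : α → ℝ} (hf : Measurable f) (a : ℝ) :
    Tendsto (fun t => μ {x | f x ≤ t}) (𝓝[>] a) (𝓝 (μ {x | f x ≤ a})) := by
  have hInter : ⋂ t > a, {x | f x ≤ t} = {x | f x ≤ a} := by
    ext x
    simpa only [mem_iInter, mem_ofPred_eq] using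
      ⟨le_of_forall_gt_imp_ge_of_dense, fun hx t ht => hx.trans ht.le⟩
  rw [← hInter]
  exact tendsto_measure_biInter_gt
    (fun t _ => (measurableSet_le hf measurable_const).nullMeasurableSet)
    (fun _ _ _ hij _ hx => le_trans hx hij) ⟨a + 1, by linarith, measure_ne_top μ _⟩

section disDelta

variable {X : Type*} [PseudoMetricSpace X]

theorem disDelta_le_ofReal_iff {S : Set (X × X)} {r : ℝ} (hr : 0 ≤ r) :
    disDelta S ≤ ENNReal.ofReal r ↔ S ⊆ {p | dist p.1 p.2 ≤ r} := by
  simp only [disDelta, iSup₂_le_iff, ENNReal.ofReal_le_ofReal_iff hr]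
  rfl

theorem isClosed_setOf_dist_le (r : ℝ) : IsClosed {p : X × X | dist p.1 p.2 ≤ r} :=
  isClosed_le continuous_dist continuous_const

variable [MeasurableSpace X] (π : Measure (X × X))

theorem disDeltaM_le {S : Set (X × X)} (hS : IsClosed S) :
    disDeltaM π ≤ max (disDelta S) (1 - π S) :=
  iInf₂_le (f := fun S (_ : IsClosed S) => max (disDelta S) (1 - π S)) S hS

theorem disDeltaM_le_one : disDeltaM π ≤ 1 := by
  simpa [disDelta] using disDeltaM_le π isClosed_empty

theorem one_sub_measure_setOf_dist_le_le_disDeltaM {t : ℝ}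
    (ht : disDeltaM π < ENNReal.ofReal t) :
    1 - π {p | dist p.1 p.2 ≤ t} ≤ disDeltaM π := by
  have ht₀ : 0 ≤ t := by
    by_contra! h
    simp [ENNReal.ofReal_of_nonpos h.le] at ht
  refine le_of_forall_gt_imp_ge_of_dense fun b hb => ?_
  obtain ⟨S, -, hSlt⟩ :
      ∃ S, IsClosed S ∧ max (disDelta S) (1 - π S) < min b (ENNReal.ofReal t) := by
    have h := lt_min hb ht
    rw [disDeltaM] at h
    simpa only [mem_ofPred_eq, iInf_lt_iff, exists_prop] using h
  rw [lt_min_iff, max_lt_iff, max_lt_iff] at hSlt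
  have hband : S ⊆ {p | dist p.1 p.2 ≤ t} := (disDelta_le_ofReal_iff ht₀).1 hSlt.2.1.le
  calc 1 - π {p | dist p.1 p.2 ≤ t} ≤ 1 - π S := tsub_le_tsub_left (measure_mono hband) 1
    _ ≤ b := hSlt.1.2.le

end disDelta

theorem stmt7_general {X : Type*} [MetricSpace X] [TopologicalSpace.SeparableSpace X]
    [MeasurableSpace X] [BorelSpace X]
    (π : Measure (X × X)) [IsProbabilityMeasure π] :
    ∃ S : Set (X × X), IsClosed S ∧ disDeltaM π = max (disDelta S) (1 - π S) := by
  set r := (disDeltaM π).toReal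
  have hr : ENNReal.ofReal r = disDeltaM π :=
    ENNReal.ofReal_toReal ((disDeltaM_le_one π).trans_lt one_lt_top).ne
  refine ⟨{p | dist p.1 p.2 ≤ r}, isClosed_setOf_dist_le r,
    le_antisymm (disDeltaM_le π (isClosed_setOf_dist_le r)) (max_le ?_ ?_)⟩
  · exact hr ▸ (disDelta_le_ofReal_iff toReal_nonneg).2 subset_rfl
  · have hlim := ((ENNReal.continuous_sub_left one_ne_top).tendsto _).comp
      (tendsto_measure_setOf_le_nhdsGT (μ := π) measurable_dist r)
    refine le_of_tendsto hlim (eventually_nhdsWithin_of_forall fun t (ht : r < t) => ?_)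
    refine one_sub_measure_setOf_dist_le_le_disDeltaM π ?_
    rwa [← hr, ENNReal.ofReal_lt_ofReal_iff (toReal_nonneg.trans_lt ht)]

theorem stmt7 {X : Type*} [MetricSpace X] [CompleteSpace X] [TopologicalSpace.SeparableSpace X]
    [MeasurableSpace X] [BorelSpace X]
    (π : Measure (X × X)) [IsProbabilityMeasure π] :
    ∃ S : Set (X × X), IsClosed S ∧ disDeltaM π = max (disDelta S) (1 - π S) :=
  stmt7_general π
end

section
/- Let φ : [0,1) → X and ψ : [0,1) → Y be parameters of mm-spaces X and Y. Then □(φ*d_X, ψ*d_Y) = dis((φ,ψ)_*L¹), i.e., the box distance between the pulled-back pseudo-metrics equals the distortion of the induced coupling. -/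
open MeasureTheory Metric EMetric Set Filter Topology ENNReal

attribute [local instance] MeasureTheory.Measure.Subtype.measureSpace

abbrev I01 : Type := ↥(Set.Ico (0:ℝ) 1)

open Classical in
noncomputable def disS {X Y : Type*} [PseudoMetricSpace X] [PseudoMetricSpace Y]
    (S : Set (X × Y)) : ℝ≥0∞ :=
  if S = ∅ then ⊤
  else ⨆ p ∈ S, ⨆ q ∈ S, ENNReal.ofReal |dist p.1 q.1 - dist p.2 q.2|

noncomputable def dism {X Y : Type*} [PseudoMetricSpace X] [PseudoMetricSpace Y]
    [MeasurableSpace X] [MeasurableSpace Y] (π : Measure (X × Y)) : ℝ≥0∞ :=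
  ⨅ S ∈ {S : Set (X × Y) | IsClosed S}, max (disS S) (1 - π S)

noncomputable def boxP (ρ₁ ρ₂ : I01 → I01 → ℝ) : ℝ≥0∞ :=
  ⨅ ε ∈ {ε : ℝ≥0∞ | ∃ I₀ : Set I01, MeasurableSet I₀ ∧ 1 - ε ≤ volume I₀ ∧
      ∀ s ∈ I₀, ∀ t ∈ I₀, |ρ₁ s t - ρ₂ s t| ≤ ε.toReal}, ε

/-!
A closed set `S ⊆ X × Y` of distortion and co-mass at most `ε` pulls back under `s ↦ (φ s, ψ s)`
to a set `I₀` witnessing `□ ≤ ε`. Conversely, a witness `I₀` for `□ ≤ ε` is sent into the closed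
set `closure ((φ, ψ) '' I₀)`, whose distortion is that of the image because the distortion of a
pair of points is continuous, and whose mass under the coupling is at least `L¹(I₀)`.
-/

section Distortion

variable {X Y : Type*} [PseudoMetricSpace X] [PseudoMetricSpace Y]

theorem disS_le_iff {S : Set (X × Y)} (hS : S.Nonempty) {ε : ℝ≥0∞} :
    disS S ≤ ε ↔ ∀ p ∈ S, ∀ q ∈ S, ENNReal.ofReal |dist p.1 q.1 - dist p.2 q.2| ≤ ε := by
  simp only [disS, if_neg hS.ne_empty, iSup₂_le_iff]

theorem ofReal_le_disS {S : Set (X × Y)} {p q : X × Y} (hp : p ∈ S) (hq : q ∈ S) :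
    ENNReal.ofReal |dist p.1 q.1 - dist p.2 q.2| ≤ disS S :=
  (disS_le_iff ⟨p, hp⟩).1 le_rfl p hp q hq

theorem disS_singleton (x : X × Y) : disS {x} = 0 :=
  le_antisymm ((disS_le_iff (singleton_nonempty x)).2 (by simp)) bot_le

theorem isClosed_setOf_ofReal_distortion_le (ε : ℝ≥0∞) :
    IsClosed {pq : (X × Y) × (X × Y) |
      ENNReal.ofReal |dist pq.1.1 pq.2.1 - dist pq.1.2 pq.2.2| ≤ ε} :=
  isClosed_le (ENNReal.continuous_ofReal.comp (by fun_prop)) continuous_const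

theorem disS_closure (T : Set (X × Y)) : disS (closure T) = disS T := by
  rcases T.eq_empty_or_nonempty with rfl | hT
  · simp
  refine le_antisymm ((disS_le_iff hT.closure).2 fun p hp q hq => ?_)
    ((disS_le_iff hT).2 fun p hp q hq => ofReal_le_disS (subset_closure hp) (subset_closure hq))
  have hclosure : closure T ×ˢ closure T ⊆ {pq : (X × Y) × (X × Y) |
      ENNReal.ofReal |dist pq.1.1 pq.2.1 - dist pq.1.2 pq.2.2| ≤ disS T} := by
    rw [← closure_prod_eq]
    exact closure_minimal (fun pq hpq => ofReal_le_disS hpq.1 hpq.2)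
      (isClosed_setOf_ofReal_distortion_le _)
  exact hclosure (mk_mem_prod hp hq)

variable [MeasurableSpace X] [MeasurableSpace Y]

theorem dism_le (π : Measure (X × Y)) {S : Set (X × Y)} (hS : IsClosed S) :
    dism π ≤ max (disS S) (1 - π S) :=
  iInf₂_le S hS

theorem dism_le_one [Nonempty (X × Y)] (π : Measure (X × Y)) : dism π ≤ 1 := by
  obtain ⟨x⟩ := ‹Nonempty (X × Y)›
  refine (dism_le π (isClosed_closure (s := {x}))).trans (max_le ?_ tsub_le_self)
  rw [disS_closure, disS_singleton]
  exact zero_le_one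

end Distortion

section Box

variable {ρ₁ ρ₂ : I01 → I01 → ℝ}

theorem boxP_le {ε : ℝ≥0∞} {I₀ : Set I01} (hI₀ : MeasurableSet I₀) (hvol : 1 - ε ≤ volume I₀)
    (hρ : ∀ s ∈ I₀, ∀ t ∈ I₀, |ρ₁ s t - ρ₂ s t| ≤ ε.toReal) : boxP ρ₁ ρ₂ ≤ ε :=
  iInf₂_le ε ⟨I₀, hI₀, hvol, hρ⟩

theorem le_boxP {c : ℝ≥0∞}
    (h : ∀ (ε : ℝ≥0∞) (I₀ : Set I01), MeasurableSet I₀ → 1 - ε ≤ volume I₀ →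
      (∀ s ∈ I₀, ∀ t ∈ I₀, |ρ₁ s t - ρ₂ s t| ≤ ε.toReal) → c ≤ ε) :
    c ≤ boxP ρ₁ ρ₂ :=
  le_iInf₂ fun ε ⟨I₀, hI₀, hvol, hρ⟩ => h ε I₀ hI₀ hvol hρ

end Box

section Coupling

variable {X Y : Type*} [PseudoMetricSpace X] [PseudoMetricSpace Y]
  [MeasurableSpace X] [MeasurableSpace Y] {φ : I01 → X} {ψ : I01 → Y}

theorem boxP_le_dism_map [OpensMeasurableSpace (X × Y)] (hφ : Measurable φ)
    (hψ : Measurable ψ) :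
    boxP (fun s t => dist (φ s) (φ t)) (fun s t => dist (ψ s) (ψ t)) ≤
      dism (volume.map fun s => (φ s, ψ s)) := by
  have hf : Measurable fun s => (φ s, ψ s) := hφ.prodMk hψ
  refine le_iInf₂ fun S hS => ?_
  by_cases htop : disS S = ⊤
  · simp [htop]
  have hε : max (disS S) (1 - volume.map (fun s => (φ s, ψ s)) S) ≠ ⊤ :=
    max_ne_top htop (ne_top_of_le_ne_top one_ne_top tsub_le_self)
  refine boxP_le (hf hS.measurableSet) ?_ fun s hs t ht => ?_
  · rw [← Measure.map_apply hf hS.measurableSet, tsub_le_iff_right]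
    exact le_add_tsub.trans (add_le_add_right (le_max_right _ _) _)
  · exact (ENNReal.ofReal_le_iff_le_toReal hε).1
      ((ofReal_le_disS (S := S) hs ht).trans (le_max_left _ _))

theorem dism_map_le_boxP (hf : AEMeasurable fun s => (φ s, ψ s)) :
    dism (volume.map fun s => (φ s, ψ s)) ≤
      boxP (fun s t => dist (φ s) (φ t)) (fun s t => dist (ψ s) (ψ t)) := by
  refine le_boxP fun ε I₀ _ hvol hρ => ?_
  rcases I₀.eq_empty_or_nonempty with rfl | hI₀
  · have : Nonempty (X × Y) := ⟨(φ ⟨0, by norm_num⟩, ψ ⟨0, by norm_num⟩)⟩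
    exact (dism_le_one _).trans (by simpa [tsub_eq_zero_iff_le] using hvol)
  set f : I01 → X × Y := fun s => (φ s, ψ s)
  refine (dism_le _ (isClosed_closure (s := f '' I₀))).trans (max_le ?_ ?_)
  · rw [disS_closure, disS_le_iff (hI₀.image f)]
    rintro _ ⟨s, hs, rfl⟩ _ ⟨t, ht, rfl⟩
    exact ENNReal.ofReal_le_of_le_toReal (hρ s hs t ht)
  · have hmass : volume I₀ ≤ volume.map f (closure (f '' I₀)) :=
      (measure_mono (s := I₀) (t := f ⁻¹' closure (f '' I₀))
        fun s hs => subset_closure (mem_image_of_mem f hs)).trans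
        (Measure.le_map_apply hf _)
    rw [tsub_le_iff_left]
    exact (tsub_le_iff_right.1 hvol).trans (by gcongr)

end Coupling

theorem stmt10_general {X : Type*} [MetricSpace X] [TopologicalSpace.SeparableSpace X]
    [MeasurableSpace X] [BorelSpace X] {Y : Type*} [MetricSpace Y]
    [MeasurableSpace Y] [BorelSpace Y]
    (φ : I01 → X) (ψ : I01 → Y) (hφ : Measurable φ) (hψ : Measurable ψ) :
    boxP (fun s t => dist (φ s) (φ t)) (fun s t => dist (ψ s) (ψ t)) =
      dism (volume.map (fun s => (φ s, ψ s))) := by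
  -- One second-countable factor makes closed subsets of `X × Y` measurable in the product σ-algebra.
  have : SecondCountableTopology X := UniformSpace.secondCountable_of_separable X
  exact le_antisymm (boxP_le_dism_map hφ hψ) (dism_map_le_boxP (hφ.prodMk hψ).aemeasurable)

theorem stmt10 {X : Type*} [MetricSpace X] [CompleteSpace X] [TopologicalSpace.SeparableSpace X]
    [MeasurableSpace X] [BorelSpace X] {Y : Type*} [MetricSpace Y] [CompleteSpace Y] [TopologicalSpace.SeparableSpace Y]
    [MeasurableSpace Y] [BorelSpace Y]
    (mX : Measure X) (mY : Measure Y) [IsProbabilityMeasure mX] [IsProbabilityMeasure mY]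
    (φ : I01 → X) (ψ : I01 → Y) (hφ : Measurable φ) (hψ : Measurable ψ)
    (hφm : volume.map φ = mX) (hψm : volume.map ψ = mY) :
    boxP (fun s t => dist (φ s) (φ t)) (fun s t => dist (ψ s) (ψ t)) =
      dism (volume.map (fun s => (φ s, ψ s))) :=
  stmt10_general φ ψ hφ hψ
end

section
/- Let X and Y be metric spaces and f, g : X → Y two 1-Lipschitz maps. For any Borel probability measures μ, ν on X, |d_KF^μ(f,g) − d_KF^ν(f,g)| ≤ 2·d_P(μ,ν), where the Ky Fan distance between f and g is taken with respect to the function x ↦ d_Y(f(x),g(x)). -/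
open MeasureTheory Metric EMetric Set Filter Topology ENNReal

noncomputable def kyfan {X Y : Type*} [PseudoMetricSpace Y] [MeasurableSpace X]
    (μ : Measure X) (f g : X → Y) : ℝ≥0∞ :=
  ⨅ ε ∈ {ε : ℝ≥0∞ | μ {x | ε < ENNReal.ofReal (dist (f x) (g x))} ≤ ε}, ε

noncomputable def prohorov {X : Type*} [PseudoMetricSpace X] [MeasurableSpace X]
    (μ ν : Measure X) : ℝ≥0∞ :=
  ⨅ ε ∈ {ε : ℝ≥0∞ | ∀ A : Set X, ν A ≤ μ (Metric.thickening ε.toReal A) + ε}, ε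

/-!
Write `D x = d(f x, g x)`. Since `f` and `g` are 1-Lipschitz, `D` is 2-Lipschitz, so the
`ε`-thickening of `{D > α + 2ε}` lies in `{D > α}`. Hence if `ε` witnesses `d_P(μ, ν) ≤ ε` and
`μ {D > α} ≤ α`, then `ν {D > α + 2ε} ≤ μ {D > α} + ε ≤ α + 2ε`, i.e. `d_KF^ν ≤ α + 2ε`.
Taking infima gives `d_KF^ν ≤ d_KF^μ + 2 d_P(μ, ν)`; the other inequality follows because the
one-sided Prohorov condition is symmetric for probability measures.
-/

theorem le_biInf_add_mul_biInf {a c : ℝ≥0∞} (ha₀ : a ≠ 0) (ha : a ≠ ∞) {S T : Set ℝ≥0∞}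
    (h : ∀ α ∈ S, ∀ ε ∈ T, c ≤ α + a * ε) : c ≤ (⨅ α ∈ S, α) + a * ⨅ ε ∈ T, ε := by
  simp only [ENNReal.mul_iInf_of_ne ha₀ ha, ENNReal.iInf_add, ENNReal.add_iInf]
  exact le_iInf₂ fun ε hε => le_iInf₂ fun α hα => h α hα ε hε

section

variable {X Y : Type*} [PseudoMetricSpace X] [PseudoMetricSpace Y]

theorem thickening_setOf_lt_add_two_mul_subset {f g : X → Y} (hf : LipschitzWith 1 f)
    (hg : LipschitzWith 1 g) {α ε : ℝ≥0∞} (hε : ε ≠ ∞) :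
    thickening ε.toReal {x | α + 2 * ε < ENNReal.ofReal (dist (f x) (g x))} ⊆
      {x | α < ENNReal.ofReal (dist (f x) (g x))} := by
  simp only [← edist_dist]
  intro x hx
  obtain ⟨a, ha, hxa⟩ := (mem_thickening_iff_exists_edist_lt _ _).1 hx
  rw [ofReal_toReal hε] at hxa
  have h2ε : 2 * ε ≠ ∞ := mul_ne_top ofNat_ne_top hε
  refine (ENNReal.add_lt_add_iff_right h2ε).1 (ha.out.trans_le ?_)
  calc edist (f a) (g a) ≤ edist (f a) (f x) + edist (f x) (g x) + edist (g x) (g a) :=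
        edist_triangle4 _ _ _ _
    _ ≤ edist a x + edist (f x) (g x) + edist x a := by
        gcongr
        · simpa using hf.edist_le_mul a x
        · simpa using hg.edist_le_mul x a
    _ ≤ ε + edist (f x) (g x) + ε := by rw [edist_comm a x]; gcongr
    _ = edist (f x) (g x) + 2 * ε := by ring

variable [MeasurableSpace X]

def IsProhorovBound (μ ν : Measure X) (ε : ℝ≥0∞) : Prop :=
  ∀ A : Set X, ν A ≤ μ (thickening ε.toReal A) + ε

def IsKyFanBound (μ : Measure X) (f g : X → Y) (α : ℝ≥0∞) : Prop :=
  μ {x | α < ENNReal.ofReal (dist (f x) (g x))} ≤ α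

theorem IsProhorovBound.symm [OpensMeasurableSpace X] {μ ν : Measure X}
    [IsProbabilityMeasure μ] [IsProbabilityMeasure ν] {ε : ℝ≥0∞}
    (h : IsProhorovBound μ ν ε) : IsProhorovBound ν μ ε := by
  intro A
  set B := thickening ε.toReal A
  -- The hypothesis applied to `Bᶜ` bounds `ν Bᶜ` by the mass of `S`, which misses `A`.
  set S := thickening ε.toReal Bᶜ
  have hS : MeasurableSet S := isOpen_thickening.measurableSet
  have hAS : Disjoint A S :=
    subset_compl_iff_disjoint_right.1 (subset_compl_thickening_compl_thickening_self _ _)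
  have key : μ A + μ S ≤ ν B + ε + μ S :=
    calc μ A + μ S = μ (A ∪ S) := (measure_union hAS hS).symm
      _ ≤ 1 := prob_le_one
      _ = ν B + ν Bᶜ := (prob_add_prob_compl isOpen_thickening.measurableSet).symm
      _ ≤ ν B + (μ S + ε) := by gcongr; exact h Bᶜ
      _ = ν B + ε + μ S := by ring
  exact (ENNReal.add_le_add_iff_right (measure_ne_top μ S)).1 key

theorem prohorov_comm [OpensMeasurableSpace X] (μ ν : Measure X)
    [IsProbabilityMeasure μ] [IsProbabilityMeasure ν] : prohorov ν μ = prohorov μ ν :=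
  le_antisymm (le_iInf₂ fun _ hε => iInf₂_le _ (IsProhorovBound.symm hε))
    (le_iInf₂ fun _ hε => iInf₂_le _ (IsProhorovBound.symm hε))

theorem IsKyFanBound.add_two_mul {f g : X → Y} (hf : LipschitzWith 1 f)
    (hg : LipschitzWith 1 g) {μ ν : Measure X} {α ε : ℝ≥0∞} (hα : IsKyFanBound μ f g α)
    (hε : IsProhorovBound μ ν ε) : IsKyFanBound ν f g (α + 2 * ε) := by
  obtain rfl | hε_top := eq_or_ne ε ∞
  · simp [IsKyFanBound]
  calc ν {x | α + 2 * ε < ENNReal.ofReal (dist (f x) (g x))}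
      ≤ μ (thickening ε.toReal {x | α + 2 * ε < ENNReal.ofReal (dist (f x) (g x))}) + ε :=
        hε _
    _ ≤ μ {x | α < ENNReal.ofReal (dist (f x) (g x))} + ε := by
        gcongr; exact thickening_setOf_lt_add_two_mul_subset hf hg hε_top
    _ ≤ α + ε := by gcongr; exact hα
    _ ≤ α + 2 * ε := by gcongr; exact le_mul_of_one_le_left' one_le_two

theorem kyfan_le_kyfan_add_two_mul_prohorov {f g : X → Y} (hf : LipschitzWith 1 f)
    (hg : LipschitzWith 1 g) (μ ν : Measure X) :
    kyfan ν f g ≤ kyfan μ f g + 2 * prohorov μ ν :=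
  le_biInf_add_mul_biInf two_ne_zero ofNat_ne_top fun _ hα _ hε =>
    iInf₂_le _ (IsKyFanBound.add_two_mul hf hg hα hε)

end

theorem stmt15 {X Y : Type*} [MetricSpace X] [MetricSpace Y]
    [MeasurableSpace X] [BorelSpace X]
    (f g : X → Y) (hf : LipschitzWith 1 f) (hg : LipschitzWith 1 g)
    (μ ν : Measure X) [IsProbabilityMeasure μ] [IsProbabilityMeasure ν] :
    kyfan μ f g ≤ kyfan ν f g + 2 * prohorov μ ν ∧
    kyfan ν f g ≤ kyfan μ f g + 2 * prohorov μ ν := by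
  refine ⟨?_, kyfan_le_kyfan_add_two_mul_prohorov hf hg μ ν⟩
  rw [← prohorov_comm μ ν]
  exact kyfan_le_kyfan_add_two_mul_prohorov hf hg ν μ
end

section
/- Let X and Y be mm-spaces. If there exists a coupling π of m_X and m_Y with dis(supp π) = 0, then X and Y are mm-isomorphic, i.e., there is a measure-preserving isometry from supp m_X onto supp m_Y. -/
/-!
Since `dis (supp π) = 0`, the closed set `supp π` is a distance-preserving relation, hence the
graph of an isometry `f`. Its first projection is dense in `supp m_X` (the complement of
`supp π` is `π`-null), and closed under limits because the second coordinates of a convergent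
sequence of points in `supp π` form a Cauchy sequence in the complete space `Y`; so `f` is
defined on all of `supp m_X`, and symmetrically onto `supp m_Y`. As `π` is carried by the graph
of `f`, the pushforward of `m_X` by `f` is `m_Y`.
-/

open MeasureTheory Metric EMetric Set Filter Topology ENNReal

def msupp {X : Type*} [TopologicalSpace X] [MeasurableSpace X] (mu : Measure X) : Set X :=
  {x | forall U : Set X, IsOpen U -> x ∈ U -> 0 < mu U}

lemma msupp_eq_support {X : Type*} [TopologicalSpace X] [MeasurableSpace X] (μ : Measure X) :
    msupp μ = μ.support := by
  rw [Measure.support_eq_forall_isOpen]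
  exact Set.ext fun x => forall_congr' fun U => forall_comm

lemma disS_eq_zero_iff {X Y : Type*} [PseudoMetricSpace X] [PseudoMetricSpace Y]
    {S : Set (X × Y)} :
    disS S = 0 ↔ S.Nonempty ∧ ∀ p ∈ S, ∀ q ∈ S, dist p.1 q.1 = dist p.2 q.2 := by
  rw [disS, nonempty_iff_ne_empty]
  split_ifs with hS
  · simp [hS]
  · simp [hS, iSup_eq_zero, abs_nonpos_iff, sub_eq_zero]

section Support

variable {X Y : Type*} [TopologicalSpace X] [MeasurableSpace X] [OpensMeasurableSpace X]
  [TopologicalSpace Y] [MeasurableSpace Y] [BorelSpace Y] {μ : Measure X} {f : X → Y}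

lemma Continuous.mapsTo_support_map (hf : Continuous f) :
    MapsTo f μ.support (μ.map f).support := by
  intro x hx
  rw [Measure.support_eq_forall_isOpen] at hx ⊢
  intro U hxU hU
  rw [Measure.map_apply hf.measurable hU.measurableSet]
  exact hx _ hxU (hU.preimage hf)

lemma Continuous.support_map_subset_closure_image [HereditarilyLindelofSpace X]
    (hf : Continuous f) : (μ.map f).support ⊆ closure (f '' μ.support) := by
  intro y hy
  rw [Measure.support_eq_forall_isOpen] at hy
  refine mem_closure_iff.2 fun U hU hyU => ?_
  have hpos := hy U hyU hU
  rw [Measure.map_apply hf.measurable hU.measurableSet] at hpos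
  obtain ⟨x, hxU, hx⟩ := Measure.nonempty_inter_support_of_pos hpos
  exact ⟨f x, hxU, mem_image_of_mem f hx⟩

end Support

lemma ContinuousOn.measurableSet_inter_preimage {X Y : Type*} [TopologicalSpace X]
    [MeasurableSpace X] [OpensMeasurableSpace X] [TopologicalSpace Y] [MeasurableSpace Y]
    [BorelSpace Y] {f : X → Y} {s : Set X} (hf : ContinuousOn f s) (hs : MeasurableSet s)
    {t : Set Y} (ht : MeasurableSet t) : MeasurableSet (s ∩ f ⁻¹' t) := by
  have := (MeasurableEmbedding.subtype_coe hs).measurableSet_image.2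
    ((continuousOn_iff_continuous_domRestrict.1 hf).measurable ht)
  rwa [domRestrict_eq, preimage_comp, Subtype.image_preimage_coe] at this

section DistPreservingRelation

variable {X Y : Type*} {S : Set (X × Y)}

lemma eq_of_mem_of_dist_preserving [PseudoMetricSpace X] [MetricSpace Y]
    (hS : ∀ p ∈ S, ∀ q ∈ S, dist p.1 q.1 = dist p.2 q.2) {x : X} {y y' : Y}
    (hy : (x, y) ∈ S) (hy' : (x, y') ∈ S) : y = y' :=
  dist_eq_zero.1 ((hS _ hy _ hy').symm.trans (dist_self x))

lemma exists_mem_of_mem_closure_image_fst [PseudoMetricSpace X] [PseudoMetricSpace Y]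
    [CompleteSpace Y] (hSc : IsClosed S) (hS : ∀ p ∈ S, ∀ q ∈ S, dist p.1 q.1 = dist p.2 q.2)
    {x : X} (hx : x ∈ closure (Prod.fst '' S)) : ∃ y, (x, y) ∈ S := by
  obtain ⟨u, hu, hux⟩ := mem_closure_iff_seq_limit.1 hx
  choose p hpS hpu using hu
  have hp₁ : Tendsto (fun n => (p n).1) atTop (𝓝 x) := by simpa only [hpu] using hux
  have hp₂ : CauchySeq fun n => (p n).2 := by
    refine Metric.cauchySeq_iff.2 fun ε hε => ?_
    obtain ⟨N, hN⟩ := Metric.cauchySeq_iff.1 hp₁.cauchySeq ε hε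
    exact ⟨N, fun m hm n hn => hS _ (hpS m) _ (hpS n) ▸ hN m hm n hn⟩
  obtain ⟨y, hy⟩ := cauchySeq_tendsto_of_complete hp₂
  exact ⟨y, hSc.mem_of_tendsto (hp₁.prodMk_nhds hy) (Eventually.of_forall hpS)⟩

lemma exists_mem_of_mem_closure_image_snd [PseudoMetricSpace X] [PseudoMetricSpace Y]
    [CompleteSpace X] (hSc : IsClosed S) (hS : ∀ p ∈ S, ∀ q ∈ S, dist p.1 q.1 = dist p.2 q.2)
    {y : Y} (hy : y ∈ closure (Prod.snd '' S)) : ∃ x, (x, y) ∈ S := by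
  refine exists_mem_of_mem_closure_image_fst (hSc.preimage continuous_swap)
    (fun p hp q hq => (hS _ hp _ hq).symm) ?_
  rwa [← image_swap_eq_preimage_swap, ← image_comp]

end DistPreservingRelation

lemma map_fst_inter_preimage_eq_map_snd {X Y : Type*} [TopologicalSpace X] [MeasurableSpace X]
    [OpensMeasurableSpace X] [TopologicalSpace Y] [MeasurableSpace Y] [BorelSpace Y]
    {π : Measure (X × Y)} {S : Set (X × Y)} (hS : π Sᶜ = 0) {s : Set X} {f : X → Y}
    (hs : MeasurableSet s) (hf : ContinuousOn f s) (hfS : ∀ p ∈ S, p.1 ∈ s ∧ f p.1 = p.2)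
    {B : Set Y} (hB : MeasurableSet B) :
    π.map Prod.fst (s ∩ f ⁻¹' B) = π.map Prod.snd B := by
  rw [Measure.map_apply measurable_fst (hf.measurableSet_inter_preimage hs hB),
    Measure.map_apply measurable_snd hB]
  refine measure_congr (Filter.eventuallyEq_set.2 ?_)
  filter_upwards [mem_ae_iff.2 hS] with p hp
  obtain ⟨hps, hfp⟩ := hfS p hp
  simp [hps, hfp]

theorem stmt17_general {X : Type*} [MetricSpace X] [CompleteSpace X] [TopologicalSpace.SeparableSpace X]
    [MeasurableSpace X] [BorelSpace X] {Y : Type*} [MetricSpace Y] [CompleteSpace Y] [TopologicalSpace.SeparableSpace Y]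
    [MeasurableSpace Y] [BorelSpace Y]
    (mX : Measure X) (mY : Measure Y)
    (π : Measure (X × Y))
    (h1 : π.map Prod.fst = mX) (h2 : π.map Prod.snd = mY)
    (h : disS (msupp π) = 0) :
    ∃ f : X → Y,
      (∀ x ∈ msupp mX, f x ∈ msupp mY) ∧
      (∀ x ∈ msupp mX, ∀ x' ∈ msupp mX, dist (f x) (f x') = dist x x') ∧
      (∀ y ∈ msupp mY, ∃ x ∈ msupp mX, f x = y) ∧
      (∀ B : Set Y, MeasurableSet B → mX {x | x ∈ msupp mX ∧ f x ∈ B} = mY B) := by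
  subst h1 h2
  simp only [msupp_eq_support] at h ⊢
  obtain ⟨⟨p₀, -⟩, hS⟩ := disS_eq_zero_iff.1 h
  have : Nonempty Y := ⟨p₀.2⟩
  have hSc : IsClosed π.support := Measure.isClosed_support
  have hfst : MapsTo Prod.fst π.support (π.map Prod.fst).support :=
    continuous_fst.mapsTo_support_map
  have hsnd : MapsTo Prod.snd π.support (π.map Prod.snd).support :=
    continuous_snd.mapsTo_support_map
  -- The support of `π` is the graph of `f` over the support of `mX`.
  let f : X → Y := fun x => Classical.epsilon fun y => (x, y) ∈ π.support
  have hf : ∀ x ∈ (π.map Prod.fst).support, (x, f x) ∈ π.support := fun x hx =>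
    Classical.epsilon_spec (exists_mem_of_mem_closure_image_fst hSc hS
      (continuous_fst.support_map_subset_closure_image hx))
  have hfS : ∀ p ∈ π.support, f p.1 = p.2 := fun p hp =>
    eq_of_mem_of_dist_preserving hS (hf _ (hfst hp)) hp
  have hiso : ∀ x ∈ (π.map Prod.fst).support, ∀ x' ∈ (π.map Prod.fst).support,
      dist (f x) (f x') = dist x x' := fun x hx x' hx' => (hS _ (hf x hx) _ (hf x' hx')).symm
  refine ⟨f, fun x hx => hsnd (hf x hx), hiso, fun y hy => ?_, fun B hB => ?_⟩
  · obtain ⟨x, hx⟩ := exists_mem_of_mem_closure_image_snd hSc hS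
      (continuous_snd.support_map_subset_closure_image hy)
    exact ⟨x, hfst hx, hfS _ hx⟩
  · have hfc : ContinuousOn f (π.map Prod.fst).support :=
      continuousOn_iff_continuous_domRestrict.2 <| Isometry.continuous <|
        Isometry.of_dist_eq fun (x x' : (π.map Prod.fst).support) => hiso x x.2 x' x'.2
    exact map_fst_inter_preimage_eq_map_snd Measure.measure_compl_support
      Measure.isClosed_support.measurableSet hfc (fun p hp => ⟨hfst hp, hfS p hp⟩) hB

theorem stmt17 {X : Type*} [MetricSpace X] [CompleteSpace X] [TopologicalSpace.SeparableSpace X]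
    [MeasurableSpace X] [BorelSpace X] {Y : Type*} [MetricSpace Y] [CompleteSpace Y] [TopologicalSpace.SeparableSpace Y]
    [MeasurableSpace Y] [BorelSpace Y]
    (mX : Measure X) (mY : Measure Y) [IsProbabilityMeasure mX] [IsProbabilityMeasure mY]
    (π : Measure (X × Y)) [IsProbabilityMeasure π]
    (h1 : π.map Prod.fst = mX) (h2 : π.map Prod.snd = mY)
    (h : disS (msupp π) = 0) :
    ∃ f : X → Y,
      (∀ x ∈ msupp mX, f x ∈ msupp mY) ∧
      (∀ x ∈ msupp mX, ∀ x' ∈ msupp mX, dist (f x) (f x') = dist x x') ∧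
      (∀ y ∈ msupp mY, ∃ x ∈ msupp mX, f x = y) ∧
      (∀ B : Set Y, MeasurableSet B → mX {x | x ∈ msupp mX ∧ f x ∈ B} = mY B) :=
  stmt17_general mX mY π h1 h2 h
end
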